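/- arXiv:1004.1084 — 3 statements merged into one kernel-verified Lean document; each statement's English description precedes it below -/
import Mathlib

section
/- An admissible set H (i.e., ν_p(H) < p for all primes p) has 𝔖(H) > 0, and conversely if ν_p(H) = p for some prime p then 𝔖(H) = 0. -/
/-- Number of residue classes modulo `p` occupied by the finite set `H` of integers. -/
def nu (p : ℕ) (H : Finset ℤ) : ℕ := (H.image fun h : ℤ => (h : ZMod p)).card

/-- The singular series of the prime tuple conjecture. -/
noncomputable def singularSeries (H : Finset ℤ) : ℝ :=
  ∏' p : Nat.Primes, (1 - (nu p H : ℝ) / ((p : ℕ) : ℝ)) * ((1 - 1 / ((p : ℕ) : ℝ))⁻¹) ^ H.card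

/-!
The Euler factor at `p` vanishes exactly when `H` fills every class mod `p`, which gives the
second half. For the first, once `p > 2 max |h|` the elements of `H` are distinct mod `p`, so the
factor is `(1 - k/p)(1 - 1/p)⁻ᵏ` with `k = |H|`, whose logarithm is `O(k²/p²)` because the
first-order terms `-k/p` and `+k/p` cancel. The logarithms are therefore summable and the
series is the exponential of their sum, hence positive.
-/

open Filter Real

noncomputable def singularFactor (H : Finset ℤ) (p : ℕ) : ℝ :=
  (1 - (nu p H : ℝ) / p) * ((1 - 1 / (p : ℝ))⁻¹) ^ H.card

theorem singularSeries_eq_tprod (H : Finset ℤ) :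
    singularSeries H = ∏' p : Nat.Primes, singularFactor H p :=
  rfl

theorem nu_eq_card_of_abs_sub_lt {p : ℕ} {H : Finset ℤ}
    (h : ∀ a ∈ H, ∀ b ∈ H, |a - b| < p) : nu p H = H.card := by
  refine Finset.card_image_of_injOn fun a ha b hb hab => ?_
  have hdvd : (p : ℤ) ∣ a - b := (ZMod.intCast_eq_intCast_iff_dvd_sub b a p).mp hab.symm
  exact sub_eq_zero.mp (Int.eq_zero_of_abs_lt_dvd hdvd (h a ha b hb))

theorem eventually_nu_eq_card (H : Finset ℤ) : ∀ᶠ p in atTop, nu p H = H.card := by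
  filter_upwards [eventually_gt_atTop (2 * H.sup Int.natAbs)] with p hp
  refine nu_eq_card_of_abs_sub_lt fun a ha b hb => ?_
  have ha' : a.natAbs ≤ H.sup Int.natAbs := Finset.le_sup ha
  have hb' : b.natAbs ≤ H.sup Int.natAbs := Finset.le_sup hb
  rw [Int.abs_eq_natAbs]
  omega

theorem abs_log_one_sub_add_self_le {x : ℝ} (hx : |x| ≤ 1 / 2) :
    |log (1 - x) + x| ≤ 2 * x ^ 2 := by
  have h := abs_log_sub_add_sum_range_le (hx.trans_lt (by norm_num)) 1
  norm_num [add_comm x] at h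
  calc |log (1 - x) + x| ≤ x ^ 2 / (1 - |x|) := h
    _ ≤ 2 * x ^ 2 := by
      rw [div_le_iff₀ (by linarith)]
      nlinarith [sq_nonneg x]

theorem abs_log_one_sub_mul_mul_inv_pow_le (k : ℕ) {x : ℝ} (hx : 0 ≤ x) (hx2 : x ≤ 1 / 2)
    (hkx : k * x ≤ 1 / 2) :
    |log ((1 - k * x) * ((1 - x)⁻¹) ^ k)| ≤ 2 * (k ^ 2 + k) * x ^ 2 := by
  have hkx0 : 0 ≤ k * x := by positivity
  have hk := abs_log_one_sub_add_self_le (x := k * x) (by rw [abs_of_nonneg hkx0]; exact hkx)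
  have h1 := abs_log_one_sub_add_self_le (x := x) (by rw [abs_of_nonneg hx]; exact hx2)
  have hsplit : log ((1 - k * x) * ((1 - x)⁻¹) ^ k) =
      (log (1 - k * x) + k * x) - k * (log (1 - x) + x) := by
    have hkx1 : (1 : ℝ) - k * x ≠ 0 := by linarith
    have hx1 : ((1 - x)⁻¹) ^ k ≠ 0 := pow_ne_zero _ (inv_ne_zero (by linarith))
    rw [log_mul hkx1 hx1, log_pow, log_inv]
    ring
  calc |log ((1 - k * x) * ((1 - x)⁻¹) ^ k)|
      ≤ |log (1 - k * x) + k * x| + k * |log (1 - x) + x| := by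
        rw [hsplit]
        refine (abs_sub _ _).trans_eq ?_
        rw [abs_mul, Nat.abs_cast]
    _ ≤ 2 * (k * x) ^ 2 + k * (2 * x ^ 2) := by gcongr
    _ = 2 * (k ^ 2 + k) * x ^ 2 := by ring

theorem summable_log_singularFactor (H : Finset ℤ) :
    Summable fun n : ℕ => log (singularFactor H n) := by
  set k := H.card
  refine Summable.of_norm_bounded_eventually_nat
    ((summable_one_div_nat_pow.mpr one_lt_two).mul_left (2 * ((k : ℝ) ^ 2 + k))) ?_
  filter_upwards [eventually_nu_eq_card H, eventually_ge_atTop (2 * k), eventually_ge_atTop 2]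
    with n hnu hkn hn
  have hn0 : (0 : ℝ) < n := by positivity
  have hx2 : 1 / (n : ℝ) ≤ 1 / 2 := one_div_le_one_div_of_le two_pos (by exact_mod_cast hn)
  have hkx : k * (1 / (n : ℝ)) ≤ 1 / 2 := by
    rw [mul_one_div, div_le_div_iff₀ hn0 two_pos]
    exact_mod_cast (by omega : k * 2 ≤ 1 * n)
  have h := abs_log_one_sub_mul_mul_inv_pow_le k (by positivity) hx2 hkx
  rw [mul_one_div] at h
  simpa [singularFactor, hnu, div_pow] using h

theorem singularFactor_pos {H : Finset ℤ} {p : ℕ} (hp : 1 < p) (h : nu p H < p) :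
    0 < singularFactor H p := by
  have hp0 : (0 : ℝ) < p := by positivity
  have hnu : (nu p H : ℝ) / p < 1 := (div_lt_one hp0).mpr (by exact_mod_cast h)
  have hone : 1 / (p : ℝ) < 1 := (div_lt_one hp0).mpr (by exact_mod_cast hp)
  unfold singularFactor
  apply mul_pos (by linarith)
  exact pow_pos (inv_pos.mpr (by linarith)) _

theorem singularFactor_eq_zero {H : Finset ℤ} {p : ℕ} (hp : p ≠ 0) (h : nu p H = p) :
    singularFactor H p = 0 := by
  simp [singularFactor, h, hp]

theorem singularSeries_pos_iff_admissible (H : Finset ℤ) :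
    ((∀ p : ℕ, p.Prime → nu p H < p) → 0 < singularSeries H) ∧
    ((∃ p : ℕ, p.Prime ∧ nu p H = p) → singularSeries H = 0) := by
  rw [singularSeries_eq_tprod]
  refine ⟨fun hadm => ?_, fun ⟨p, hp, hnu⟩ => ?_⟩
  · have hpos (p : Nat.Primes) : 0 < singularFactor H p :=
      singularFactor_pos p.2.one_lt (hadm p p.2)
    rw [← rexp_tsum_eq_tprod hpos ((summable_log_singularFactor H).subtype _)]
    exact exp_pos _
  · exact tprod_of_exists_eq_zero ⟨⟨p, hp⟩, singularFactor_eq_zero hp.ne_zero hnu⟩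
end

section
/- Let H be an admissible k-element set of integers, P a squarefree positive integer, and for h ∈ ℤ define Π₁(h) = ∏_{p | P} [(1 − ν_p(H∪{h})/p) / ((1 − ν_p(H)/p)(1 − 1/p))]. Then the average (1/P) ∑_{h=1}^{P} Π₁(h) equals exactly 1. -/
/-!
`Π₁` is periodic modulo `P`, and by the Chinese remainder theorem its sum over a period factors
into a product over `p ∣ P` of sums over `ZMod p`. Each local sum equals `p`: of the `p` residues
`a`, the `ν_p` occupied ones leave `ν_p` unchanged and the other `p - ν_p` raise it by one, so
`∑ₐ (p - ν_p(H ∪ {a})) = (p - ν_p)(p - 1)`, which cancels the normalising denominator.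
-/

open Finset

theorem sum_card_sub_card_insert {R α : Type*} [CommRing R] [Fintype α] [DecidableEq α]
    (T : Finset α) :
    ∑ a, ((Fintype.card α : R) - #(insert a T)) = (Fintype.card α - #T) * (Fintype.card α - 1) := by
  rw [← sum_add_sum_compl T]
  have h_in : ∀ a ∈ T, ((Fintype.card α : R) - #(insert a T)) = Fintype.card α - #T :=
    fun a ha => by rw [insert_eq_of_mem ha]
  have h_out : ∀ a ∈ Tᶜ, ((Fintype.card α : R) - #(insert a T)) = Fintype.card α - (#T + 1) :=
    fun a ha => by rw [card_insert_of_notMem (mem_compl.mp ha), Nat.cast_succ]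
  rw [sum_congr rfl h_in, sum_congr rfl h_out, sum_const, sum_const, card_compl, nsmul_eq_mul,
    nsmul_eq_mul, Nat.cast_sub (card_le_univ T)]
  ring

theorem sum_one_sub_card_insert_div {K α : Type*} [Field K] [CharZero K] [Fintype α]
    [DecidableEq α] (T : Finset α) (hα : 1 < Fintype.card α) (hT : #T < Fintype.card α) :
    ∑ a, (1 - (#(insert a T) : K) / Fintype.card α) /
      ((1 - (#T : K) / Fintype.card α) * (1 - 1 / Fintype.card α)) = Fintype.card α := by
  have h_sum := sum_card_sub_card_insert (R := K) T
  set n := Fintype.card α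
  have hn : (n : K) ≠ 0 := Nat.cast_ne_zero.mpr (by omega)
  have hT' : (n : K) - #T ≠ 0 := sub_ne_zero.mpr (by exact_mod_cast hT.ne')
  have hα' : (n : K) - 1 ≠ 0 := sub_ne_zero.mpr (by exact_mod_cast hα.ne')
  simp_rw [one_sub_div hn, ← sum_div, h_sum]
  field_simp

theorem sum_Icc_intCast_zmod {M : Type*} [AddCommMonoid M] (P : ℕ) [NeZero P] (f : ZMod P → M) :
    ∑ h ∈ Icc (1 : ℤ) P, f h = ∑ x, f x := by
  have h_inj : Set.InjOn (fun h : ℤ => (h : ZMod P)) (Icc (1 : ℤ) P) := by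
    intro a ha b hb hab
    have ha := mem_Icc.mp ha
    have hb := mem_Icc.mp hb
    have h_zero : b - a = 0 :=
      Int.eq_zero_of_abs_lt_dvd ((ZMod.intCast_eq_intCast_iff_dvd_sub a b P).mp hab)
        (abs_lt.mpr ⟨by omega, by omega⟩)
    omega
  have h_univ : (Icc (1 : ℤ) P).image (fun h : ℤ => (h : ZMod P)) = univ := by
    refine eq_univ_of_card _ ?_
    rw [card_image_of_injOn h_inj, Int.card_Icc, ZMod.card]
    omega
  rw [← sum_image h_inj, h_univ]

instance neZero_of_mem_primeFactors {P : ℕ} (p : P.primeFactors) : NeZero (p : ℕ) :=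
  ⟨(Nat.prime_of_mem_primeFactors p.2).ne_zero⟩

theorem sum_zmod_prod_primeFactors {R : Type*} [CommSemiring R] {P : ℕ} [NeZero P]
    (hP : Squarefree P) (g : (p : P.primeFactors) → ZMod p → R) :
    ∑ x : ZMod P, ∏ p, g p (ZMod.cast x) = ∏ p, ∑ a, g p a := by
  have h_coprime : Pairwise (Function.onFun Nat.Coprime fun p : P.primeFactors => (p : ℕ)) :=
    fun p q hpq => (Nat.coprime_primes (Nat.prime_of_mem_primeFactors p.2)
      (Nat.prime_of_mem_primeFactors q.2)).mpr (Subtype.coe_ne_coe.mpr hpq)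
  have h_prod : ∏ p : P.primeFactors, (p : ℕ) = P :=
    (prod_coe_sort P.primeFactors id).trans (Nat.prod_primeFactors_of_squarefree hP)
  let e : ZMod P ≃+* ∀ p : P.primeFactors, ZMod p :=
    (ZMod.ringEquivCongr h_prod.symm).trans (ZMod.prodEquivPi _ h_coprime)
  have h_e : ∀ x p, e x p = ZMod.cast x := fun x p =>
    RingHom.congr_fun ((Pi.evalRingHom _ p).comp e.toRingHom |>.ext_zmod
      (ZMod.castHom (Nat.dvd_of_mem_primeFactors p.2) _)) x
  rw [Fintype.prod_sum]
  exact Fintype.sum_equiv e.toEquiv _ _ fun x => by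
    simp only [RingEquiv.toEquiv_eq_coe, EquivLike.coe_coe, h_e]

theorem nu_insert (p : ℕ) (H : Finset ℤ) (h : ℤ) :
    nu p (insert h H) = #(insert (h : ZMod p) (H.image fun h : ℤ => (h : ZMod p))) := by
  rw [nu, image_insert]

theorem average_pi1_eq_one (H : Finset ℤ) (hadm : ∀ p : ℕ, p.Prime → nu p H < p)
    (P : ℕ) (hP : Squarefree P) (hpos : 0 < P) :
    (1 / (P : ℝ)) * ∑ h ∈ Finset.Icc (1 : ℤ) (P : ℤ),
      ∏ p ∈ P.primeFactors,
        (1 - (nu p (insert h H) : ℝ) / p) /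
          ((1 - (nu p H : ℝ) / p) * (1 - 1 / (p : ℝ))) = 1 := by
  have : NeZero P := ⟨hpos.ne'⟩
  let F : (p : P.primeFactors) → ZMod p → ℝ := fun p a =>
    (1 - (#(insert a (H.image fun h : ℤ => (h : ZMod p))) : ℝ) / p) /
      ((1 - (nu p H : ℝ) / p) * (1 - 1 / (p : ℝ)))
  have h_summand : ∀ h : ℤ, ∏ p ∈ P.primeFactors,
      (1 - (nu p (insert h H) : ℝ) / p) / ((1 - (nu p H : ℝ) / p) * (1 - 1 / (p : ℝ))) =
        ∏ p, F p (ZMod.cast (h : ZMod P)) := fun h => by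
    rw [← prod_coe_sort]
    refine prod_congr rfl fun p _ => ?_
    rw [ZMod.cast_intCast (Nat.dvd_of_mem_primeFactors p.2), nu_insert]
  have h_local : ∀ p : P.primeFactors, ∑ a, F p a = p := fun p => by
    have hp := Nat.prime_of_mem_primeFactors p.2
    have h := sum_one_sub_card_insert_div (K := ℝ) (H.image fun h : ℤ => (h : ZMod p))
      (by rw [ZMod.card]; exact hp.one_lt) (by rw [ZMod.card]; exact hadm p hp)
    rwa [ZMod.card] at h
  rw [sum_congr rfl fun h _ => h_summand h,
    sum_Icc_intCast_zmod P fun x => ∏ p, F p (ZMod.cast x), sum_zmod_prod_primeFactors hP,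
    Fintype.prod_congr _ _ h_local, prod_coe_sort P.primeFactors (fun p => (p : ℝ)),
    ← Nat.cast_prod, Nat.prod_primeFactors_of_squarefree hP]
  field_simp
end

section
/- For any real y ≥ 2, ∑_{p > y} 1/p² ≤ C/(y log y) for an absolute constant C, where the sum runs over primes p > y. -/
/-!
Since `log p > log y` for `p > y`, it suffices to show `∑_{p > y} log p / p² ≤ 2 log 4 / y`.
Partial summation against `1 / p² = ∑_{n ≥ p} (1 / n² - 1 / (n + 1)²)` turns the left side into
`∑_{n > y} θ(n) (1 / n² - 1 / (n + 1)²)`, and Chebyshev's bound `θ(n) ≤ n log 4` together with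
`n (1 / n² - 1 / (n + 1)²) ≤ 2 (1 / n - 1 / (n + 1))` makes it a telescoping sum bounded by
`2 log 4 / y`.
-/

open Filter Finset Topology Real Chebyshev

theorem hasSum_ite_le_sub_succ {f : ℕ → ℝ} {k : ℕ} (hf : AntitoneOn f (Set.Ici k))
    (hf0 : Tendsto f atTop (𝓝 0)) :
    HasSum (fun n ↦ if k ≤ n then f n - f (n + 1) else 0) (f k) := by
  have hnonneg : ∀ n, 0 ≤ if k ≤ n then f n - f (n + 1) else 0 := by
    intro n
    split_ifs with hn
    · exact sub_nonneg.2 (hf hn (Set.mem_Ici.2 (hn.trans n.le_succ)) n.le_succ)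
    · rfl
  have hpartial : ∀ N ≥ k,
      ∑ n ∈ range N, (if k ≤ n then f n - f (n + 1) else 0) = f k - f N := by
    intro N hN
    induction N, hN using Nat.le_induction with
    | base => rw [sub_self]; exact sum_eq_zero fun n hn ↦ if_neg (by simpa using hn)
    | succ N hN ih => rw [sum_range_succ, ih, if_pos hN]; ring
  rw [hasSum_iff_tendsto_nat_of_nonneg hnonneg]
  refine (sub_zero (f k) ▸ tendsto_const_nhds.sub hf0).congr' ?_
  filter_upwards [eventually_ge_atTop k] with N hN using (hpartial N hN).symm

theorem hasSum_ite_le_one_div_pow_sub {j k : ℕ} (hj : j ≠ 0) (hk : k ≠ 0) :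
    HasSum (fun n : ℕ ↦ if k ≤ n then 1 / (n : ℝ) ^ j - 1 / ((n : ℝ) + 1) ^ j else 0)
      (1 / (k : ℝ) ^ j) := by
  have hanti : AntitoneOn (fun n : ℕ ↦ 1 / (n : ℝ) ^ j) (Set.Ici k) := by
    intro a ha b _ hab
    have ha0 : (0 : ℝ) < a := by exact_mod_cast (Nat.pos_of_ne_zero hk).trans_le ha
    dsimp only
    gcongr
  simpa only [Nat.cast_add_one] using
    hasSum_ite_le_sub_succ hanti (tendsto_const_div_pow 1 j hj)

theorem mul_one_div_sq_sub_le {x : ℝ} (hx : 0 < x) :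
    x * (1 / x ^ 2 - 1 / (x + 1) ^ 2) ≤ 2 * (1 / x - 1 / (x + 1)) := by
  have hx1 : 0 < x + 1 := by linarith
  rw [div_sub_div _ _ (by positivity) (by positivity), div_sub_div _ _ hx.ne' hx1.ne',
    mul_div_assoc', mul_div_assoc', div_le_div_iff₀ (by positivity) (by positivity)]
  nlinarith [pow_pos hx 3, pow_pos hx1 2]

theorem sum_div_sq_le_of_sum_le {s : Finset ℕ} {a : ℕ → ℝ} {c : ℝ} {m : ℕ} (hc : 0 ≤ c)
    (hs : ∀ k ∈ s, m < k) (hA : ∀ n, ∑ k ∈ s with k ≤ n, a k ≤ c * n) :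
    ∑ k ∈ s, a k / (k : ℝ) ^ 2 ≤ 2 * c / (m + 1) := by
  have hterm : ∀ k ∈ s, HasSum
      (fun n : ℕ ↦ if k ≤ n then a k * (1 / (n : ℝ) ^ 2 - 1 / ((n : ℝ) + 1) ^ 2) else 0)
      (a k / (k : ℝ) ^ 2) := fun k hk ↦ by
    simpa only [mul_ite, mul_zero, mul_one_div] using
      (hasSum_ite_le_one_div_pow_sub two_ne_zero (hs k hk).ne_bot).mul_left (a k)
  have htel := (hasSum_ite_le_one_div_pow_sub one_ne_zero m.succ_ne_zero).mul_left (2 * c)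
  refine (hasSum_le (fun n ↦ ?_) (hasSum_sum hterm) htel).trans_eq (by push_cast; ring)
  rw [← sum_filter, ← sum_mul]
  split_ifs with hn
  · have hn0 : (0 : ℝ) < n := by exact_mod_cast m.succ_pos.trans_le hn
    have hd : 0 ≤ 1 / (n : ℝ) ^ 2 - 1 / ((n : ℝ) + 1) ^ 2 := by
      rw [sub_nonneg]; gcongr; linarith
    calc (∑ k ∈ s with k ≤ n, a k) * (1 / (n : ℝ) ^ 2 - 1 / ((n : ℝ) + 1) ^ 2)
        ≤ c * (n * (1 / (n : ℝ) ^ 2 - 1 / ((n : ℝ) + 1) ^ 2)) := by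
          rw [← mul_assoc]; exact mul_le_mul_of_nonneg_right (hA n) hd
      _ ≤ c * (2 * (1 / (n : ℝ) - 1 / ((n : ℝ) + 1))) :=
          mul_le_mul_of_nonneg_left (mul_one_div_sq_sub_le hn0) hc
      _ = 2 * c * (1 / (n : ℝ) ^ 1 - 1 / ((n : ℝ) + 1) ^ 1) := by ring
  · rw [filter_false_of_mem fun k hk ↦ by have := hs k hk; omega, sum_empty, zero_mul,
      mul_zero]

theorem sum_primes_log_div_sq_le (s : Finset Nat.Primes) {m : ℕ} (hs : ∀ p ∈ s, m < (p : ℕ)) :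
    ∑ p ∈ s, log (p : ℕ) / ((p : ℕ) : ℝ) ^ 2 ≤ 2 * log 4 / (m + 1) := by
  refine (sum_image (f := fun k : ℕ ↦ log k / (k : ℝ) ^ 2) (g := ((↑) : Nat.Primes → ℕ))
    Nat.Primes.coe_nat_injective.injOn).symm.trans_le ?_
  refine sum_div_sq_le_of_sum_le (log_nonneg (by norm_num)) (forall_mem_image.2 hs) fun n ↦ ?_
  calc ∑ k ∈ s.image (↑) with k ≤ n, log k
      ≤ ∑ p ∈ Nat.primesLE n, log p := by
        refine sum_le_sum_of_subset_of_nonneg (fun k hk ↦ ?_) fun k _ _ ↦ log_natCast_nonneg k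
        obtain ⟨hks, hkn⟩ := mem_filter.1 hk
        obtain ⟨p, -, rfl⟩ := mem_image.1 hks
        exact Nat.mem_primesLE.2 ⟨hkn, p.2⟩
    _ = θ n := (theta_eq_sum_primesLE_log n).symm
    _ ≤ log 4 * n := theta_le_log4_mul_x n.cast_nonneg

theorem sum_inv_sq_primes_gt : ∃ C : ℝ, 0 < C ∧ ∀ y : ℝ, 2 ≤ y →
    (∑' p : Nat.Primes, if y < ((p : ℕ) : ℝ) then 1 / ((p : ℕ) : ℝ) ^ 2 else 0) ≤
      C / (y * Real.log y) := by
  refine ⟨2 * log 4, by positivity, fun y hy ↦ ?_⟩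
  have hy0 : 0 < y := by linarith
  have hlogy : 0 < log y := log_pos (by linarith)
  refine tsum_le_of_sum_le' (by positivity) fun s ↦ ?_
  rw [← sum_filter]
  set t := s.filter (fun p : Nat.Primes ↦ y < ((p : ℕ) : ℝ))
  have hlog : ∀ p ∈ t, 1 / ((p : ℕ) : ℝ) ^ 2 ≤ log (p : ℕ) / ((p : ℕ) : ℝ) ^ 2 / log y :=
    fun p hp ↦ by
      rw [le_div_iff₀ hlogy, one_div_mul_eq_div]
      gcongr
      exact (mem_filter.1 hp).2.le
  calc ∑ p ∈ t, 1 / ((p : ℕ) : ℝ) ^ 2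
      ≤ (∑ p ∈ t, log (p : ℕ) / ((p : ℕ) : ℝ) ^ 2) / log y := by
        rw [sum_div]; exact sum_le_sum hlog
    _ ≤ 2 * log 4 / (⌊y⌋₊ + 1) / log y := by
        gcongr
        exact sum_primes_log_div_sq_le _ fun p hp ↦ (Nat.floor_lt hy0.le).2 (mem_filter.1 hp).2
    _ ≤ 2 * log 4 / y / log y := by gcongr; exact (Nat.lt_floor_add_one y).le
    _ = 2 * log 4 / (y * log y) := div_div _ _ _
end
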